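/- arXiv:1503.06089 — 7 statements merged into one kernel-verified Lean document; each statement's English description precedes it below -/
import Mathlib

section
/- Let ρ : [0,∞) → [0,∞) be continuous with ρ(t) = t for t ∈ [0,1], ρ(t) ≤ t for t ≥ 1, and ρ(t)/t → 0 as t → ∞. Then there exists ρ* : [0,∞) → [0,∞) with the same properties such that ρ* ≥ ρ, ρ* is non-decreasing, and t ↦ ρ*(t)/t is non-increasing on (0,∞). -/
/-- Regularization of a compression-type function `ρ` in the class `P`. -/
theorem stmt5 (ρ : ℝ → ℝ)
    (hc : ContinuousOn ρ (Set.Ici 0))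
    (hnn : ∀ t ≥ (0:ℝ), 0 ≤ ρ t)
    (hid : ∀ t ∈ Set.Icc (0:ℝ) 1, ρ t = t)
    (hle : ∀ t ≥ (1:ℝ), ρ t ≤ t)
    (hlim : Filter.Tendsto (fun t => ρ t / t) Filter.atTop (nhds 0)) :
    ∃ ρs : ℝ → ℝ,
      ContinuousOn ρs (Set.Ici 0) ∧
      (∀ t ≥ (0:ℝ), 0 ≤ ρs t) ∧
      (∀ t ∈ Set.Icc (0:ℝ) 1, ρs t = t) ∧
      (∀ t ≥ (1:ℝ), ρs t ≤ t) ∧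
      Filter.Tendsto (fun t => ρs t / t) Filter.atTop (nhds 0) ∧
      (∀ t ≥ (0:ℝ), ρ t ≤ ρs t) ∧
      MonotoneOn ρs (Set.Ici 0) ∧
      AntitoneOn (fun t => ρs t / t) (Set.Ioi 0) := by
  -- choose thresholds T n with ρ t ≤ t/(n+1) for t ≥ T n
  have hT : ∀ n : ℕ, ∃ T : ℝ, 1 ≤ T ∧ ∀ t, T ≤ t → ρ t ≤ t / (n+1) := by
    intro n
    have h1 : (0:ℝ) < 1/((n:ℝ)+1) := by positivity
    rw [Metric.tendsto_atTop] at hlim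
    obtain ⟨N, hN⟩ := hlim (1/((n:ℝ)+1)) h1
    refine ⟨max 1 N, le_max_left _ _, fun t ht => ?_⟩
    have ht1 : (1:ℝ) ≤ t := le_trans (le_max_left _ _) ht
    have ht0 : (0:ℝ) < t := by linarith
    have h2 := hN t (le_trans (le_max_right _ _) ht)
    rw [Real.dist_eq, sub_zero] at h2
    have h3 : ρ t / t ≤ 1/((n:ℝ)+1) := le_of_lt (abs_lt.mp h2).2
    calc ρ t = (ρ t / t) * t := by field_simp
    _ ≤ (1/((n:ℝ)+1)) * t := mul_le_mul_of_nonneg_right h3 ht0.le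
    _ = t / ((n:ℝ)+1) := by ring
  choose T hT1 hT2 using hT
  set C : ℕ → ℝ := fun n => sSup (ρ '' Set.Icc 0 (T n)) with hCdef
  have hCb : ∀ n, ∀ t ∈ Set.Icc (0:ℝ) (T n), ρ t ≤ C n := by
    intro n t ht
    exact le_csSup
      ((isCompact_Icc.image_of_continuousOn (hc.mono (fun x hx => hx.1))).bddAbove)
      ⟨t, ht, rfl⟩
  have hC1 : ∀ n, (1:ℝ) ≤ C n := by
    intro n
    have h := hCb n 1 ⟨zero_le_one, hT1 n⟩
    rwa [hid 1 ⟨zero_le_one, le_refl 1⟩] at h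
  have hC0 : ∀ n, (0:ℝ) ≤ C n := fun n => le_trans zero_le_one (hC1 n)
  have hρ_id : ∀ t ≥ (0:ℝ), ρ t ≤ t := by
    intro t ht
    rcases le_total t 1 with h | h
    · exact le_of_eq (hid t ⟨ht, h⟩)
    · exact hle t h
  have hρf : ∀ (n : ℕ) (t : ℝ), 0 ≤ t → ρ t ≤ t/((n:ℝ)+1) + C n := by
    intro n t ht
    rcases le_total t (T n) with h | h
    · have := hCb n t ⟨ht, h⟩
      have h4 : (0:ℝ) ≤ t/((n:ℝ)+1) := by positivity
      linarith
    · have := hT2 n t h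
      linarith [hC0 n]
  -- the regularized function
  set g : ℕ → ℝ → ℝ := fun n t => min t (t/((n:ℝ)+1) + C n) with hgdef
  set F : ℝ → ℝ := fun t => ⨅ n : ℕ, g n t with hFdef
  set ρs : ℝ → ℝ := fun t => F (max t 0) with hρsdef
  have hbdd : ∀ t : ℝ, 0 ≤ t → BddBelow (Set.range fun n => g n t) := by
    intro t ht
    refine ⟨0, fun y hy => ?_⟩
    obtain ⟨n, rfl⟩ := hy
    exact le_min ht (add_nonneg (div_nonneg ht (by positivity)) (hC0 n))
  have hF_le : ∀ t : ℝ, 0 ≤ t → ∀ n, F t ≤ g n t := fun t ht n => ciInf_le (hbdd t ht) n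
  have hF_ge : ∀ t : ℝ, 0 ≤ t → ∀ a : ℝ, (∀ n, a ≤ g n t) → a ≤ F t :=
    fun t ht a h => le_ciInf h
  have hF0 : ∀ t : ℝ, 0 ≤ t → 0 ≤ F t := by
    intro t ht
    exact hF_ge t ht 0 (fun n => le_min ht (add_nonneg (div_nonneg ht (by positivity)) (hC0 n)))
  have hρs_eq : ∀ t : ℝ, 0 ≤ t → ρs t = F t := by
    intro t ht
    simp only [hρsdef, max_eq_left ht]
  -- Lipschitz
  have hlip : ∀ s t : ℝ, ρs s ≤ ρs t + |s - t| := by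
    intro s t
    show F (max s 0) ≤ F (max t 0) + |s - t|
    set u := max s 0 with hu'
    set v := max t 0 with hv'
    have huv : |u - v| ≤ |s - t| := abs_max_sub_max_le_abs s t 0
    have hu : 0 ≤ u := le_max_right _ _
    have hv : 0 ≤ v := le_max_right _ _
    have h5 : u - v ≤ |s - t| := le_trans (le_abs_self _) huv
    have habs : (0:ℝ) ≤ |s - t| := abs_nonneg _
    have key : ∀ n, F u - |s - t| ≤ g n v := by
      intro n
      have h1 : F u ≤ g n u := hF_le u hu n
      have hm : (1:ℝ) ≤ (n:ℝ) + 1 := by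
        have : (0:ℝ) ≤ n := Nat.cast_nonneg n
        linarith
      have h2 : u ≤ v + |s - t| := by linarith
      have h7 : (u - v)/((n:ℝ)+1) ≤ |s - t| := by
        rw [div_le_iff₀ (by positivity)]
        nlinarith
      have h6 : u/((n:ℝ)+1) - v/((n:ℝ)+1) = (u - v)/((n:ℝ)+1) := by ring
      have h4 : u/((n:ℝ)+1) + C n ≤ v/((n:ℝ)+1) + C n + |s - t| := by linarith
      have h8 : g n u ≤ g n v + |s - t| := by
        simp only [hgdef]
        rcases le_total v (v/((n:ℝ)+1) + C n) with h | h
        · rw [min_eq_left h]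
          exact le_trans (min_le_left _ _) h2
        · rw [min_eq_right h]
          exact le_trans (min_le_right _ _) h4
      linarith
    have h9 := hF_ge v hv (F u - |s - t|) key
    linarith
  have hcont : Continuous ρs := by
    have : LipschitzWith 1 ρs := by
      apply LipschitzWith.of_dist_le_mul
      intro s t
      rw [Real.dist_eq, Real.dist_eq, NNReal.coe_one, one_mul, abs_sub_le_iff]
      constructor
      · linarith [hlip s t]
      · have := hlip t s
        rw [abs_sub_comm] at this
        linarith
    exact this.continuous
  -- on [0,1] equals t
  have hF_id : ∀ t ∈ Set.Icc (0:ℝ) 1, F t = t := by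
    intro t ht
    have : (fun n : ℕ => g n t) = fun _ => t := by
      funext n
      simp only [hgdef]
      apply min_eq_left
      have : (0:ℝ) ≤ t/((n:ℝ)+1) := div_nonneg ht.1 (by positivity)
      linarith [hC1 n, ht.2]
    simp only [hFdef, this, ciInf_const]
  refine ⟨ρs, hcont.continuousOn, ?_, ?_, ?_, ?_, ?_, ?_, ?_⟩
  · intro t ht
    rw [hρs_eq t ht]
    exact hF0 t ht
  · intro t ht
    rw [hρs_eq t ht.1]
    exact hF_id t ht
  · intro t ht
    have ht0 : (0:ℝ) ≤ t := le_trans zero_le_one ht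
    rw [hρs_eq t ht0]
    exact le_trans (hF_le t ht0 0) (min_le_left _ _)
  · -- limit
    rw [Metric.tendsto_atTop]
    intro ε hε
    obtain ⟨n, hn⟩ := exists_nat_gt (2/ε)
    have hn2 : 1/((n:ℝ)+1) < ε/2 := by
      have h1 : (2:ℝ)/ε < (n:ℝ)+1 := by
        have : (0:ℝ) ≤ n := Nat.cast_nonneg n
        linarith
      rw [div_lt_div_iff₀ (by positivity) (by norm_num : (0:ℝ) < 2)]
      have h2 : 2 < ε * ((n:ℝ)+1) := by
        rw [div_lt_iff₀ hε] at h1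
        nlinarith
      linarith
    refine ⟨max 1 (2 * C n / ε), fun t ht => ?_⟩
    have ht1 : (1:ℝ) ≤ t := le_trans (le_max_left _ _) ht
    have ht0 : (0:ℝ) < t := by linarith
    have htC : 2 * C n / ε ≤ t := le_trans (le_max_right _ _) ht
    have hCt : C n / t ≤ ε/2 := by
      rw [div_le_iff₀ ht0]
      rw [div_le_iff₀ hε] at htC
      nlinarith
    have hub : ρs t ≤ t/((n:ℝ)+1) + C n :=
      le_trans (by rw [hρs_eq t ht0.le]; exact hF_le t ht0.le n) (min_le_right _ _)
    have hlb : 0 ≤ ρs t := by rw [hρs_eq t ht0.le]; exact hF0 t ht0.le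
    rw [Real.dist_eq, sub_zero, abs_of_nonneg (div_nonneg hlb ht0.le)]
    have : ρs t / t ≤ 1/((n:ℝ)+1) + C n / t := by
      rw [div_le_iff₀ ht0]
      calc ρs t ≤ t/((n:ℝ)+1) + C n := hub
      _ = (1/((n:ℝ)+1) + C n / t) * t := by field_simp
    linarith
  · -- ρ ≤ ρs
    intro t ht
    rw [hρs_eq t ht]
    exact hF_ge t ht (ρ t) (fun n => le_min (hρ_id t ht) (hρf n t ht))
  · -- monotone
    intro s hs t ht hst
    rw [hρs_eq s hs, hρs_eq t ht]
    apply hF_ge t ht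
    intro n
    refine le_trans (hF_le s hs n) ?_
    simp only [hgdef]
    apply min_le_min hst
    have : s/((n:ℝ)+1) ≤ t/((n:ℝ)+1) := by gcongr
    linarith
  · -- ratio antitone
    intro s hs t ht hst
    simp only [Set.mem_Ioi] at hs ht
    have hs0 : (0:ℝ) ≤ s := hs.le
    have ht0 : (0:ℝ) ≤ t := ht.le
    simp only
    rw [hρs_eq s hs0, hρs_eq t ht0]
    -- goal: F t / t ≤ F s / s
    have hgr : ∀ n, g n t * s ≤ g n s * t := by
      intro n
      simp only [hgdef]
      rcases le_total s (s/((n:ℝ)+1) + C n) with h | h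
      · rw [min_eq_left h]
        calc min t (t/((n:ℝ)+1) + C n) * s ≤ t * s :=
          mul_le_mul_of_nonneg_right (min_le_left _ _) hs0
        _ = s * t := by ring
      · rw [min_eq_right h]
        have key : (t/((n:ℝ)+1) + C n) * s ≤ (s/((n:ℝ)+1) + C n) * t := by
          have h1 : t/((n:ℝ)+1) * s = s/((n:ℝ)+1) * t := by ring
          nlinarith [mul_le_mul_of_nonneg_left hst (hC0 n)]
        calc min t (t/((n:ℝ)+1) + C n) * s ≤ (t/((n:ℝ)+1) + C n) * s :=
          mul_le_mul_of_nonneg_right (min_le_right _ _) hs0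
        _ ≤ (s/((n:ℝ)+1) + C n) * t := key
    have h1 : ∀ n, F t * s / t ≤ g n s := by
      intro n
      rw [div_le_iff₀ ht]
      calc F t * s ≤ g n t * s := mul_le_mul_of_nonneg_right (hF_le t ht0 n) hs0
      _ ≤ g n s * t := hgr n
    have h2 : F t * s / t ≤ F s := hF_ge s hs0 _ h1
    rw [div_le_div_iff₀ ht hs]
    rw [div_le_iff₀ ht] at h2
    linarith
end

section
/- Let ε : (0,∞) → (0,1] be non-increasing with ε(t) = 1 for t ∈ (0,1] and lim_{t→∞} ε(t) = 0. Define ε*(t) = (1/t) · sup{s·ε(s) : 0 < s ≤ t}. Then ε* is non-increasing, ε ≤ ε* ≤ 1, ε* = 1 on (0,1], t ↦ t·ε*(t) is non-decreasing, and lim_{t→∞} ε*(t) = 0. -/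
/-!
With `S t = supMul ε t = sup {s ε(s) : 0 < s ≤ t}` we have `ε* t = S t / t`. Since `s ε(s) ≤ s`, `S` is
squeezed between `t ε(t)` and `t`, and it is non-decreasing in `t`. For `0 < s ≤ t`, every
`u ∈ (s, t]` has `u ε(u) ≤ t ε(s)` because `ε` is non-increasing, whence `S t ≤ (t / s) S s`:
this is the monotonicity of `ε*`. Finally, if `ε ≤ η` on `[T, ∞)` then `S t ≤ T + η t`, so
`ε* t ≤ T / t + η`, which gives `ε* → 0`.
-/

/-- `ε*(t) = (1/t) ⬝ sup {s ⬝ ε s : 0 < s ≤ t}`. -/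
noncomputable def epsStar (ε : ℝ → ℝ) (t : ℝ) : ℝ :=
  (1 / t) * sSup ((fun s => s * ε s) '' Set.Ioc 0 t)

open Set Filter Topology

noncomputable def supMul (ε : ℝ → ℝ) (t : ℝ) : ℝ :=
  sSup ((fun s => s * ε s) '' Ioc 0 t)

section SupMul

variable {ε : ℝ → ℝ} {s t : ℝ}

theorem supMul_le_of_forall_mem_Ioc {c : ℝ} (ht : 0 < t) (h : ∀ u ∈ Ioc 0 t, u * ε u ≤ c) :
    supMul ε t ≤ c :=
  csSup_le ((nonempty_Ioc.2 ht).image _) (forall_mem_image.2 h)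

theorem bddAbove_image_mul_Ioc (hle : ∀ u > 0, ε u ≤ 1) (t : ℝ) :
    BddAbove ((fun s => s * ε s) '' Ioc 0 t) := by
  refine ⟨t, forall_mem_image.2 fun u ⟨hu, hut⟩ => ?_⟩
  nlinarith [hle u hu]

theorem mul_le_supMul (hle : ∀ u > 0, ε u ≤ 1) (hs : s ∈ Ioc 0 t) : s * ε s ≤ supMul ε t :=
  le_csSup (bddAbove_image_mul_Ioc hle t) (mem_image_of_mem _ hs)

theorem supMul_le_self (hle : ∀ u > 0, ε u ≤ 1) (ht : 0 < t) : supMul ε t ≤ t :=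
  supMul_le_of_forall_mem_Ioc ht fun u ⟨hu, hut⟩ => by nlinarith [hle u hu]

theorem monotoneOn_supMul (hle : ∀ u > 0, ε u ≤ 1) : MonotoneOn (supMul ε) (Ioi 0) :=
  fun _ hs t _ hst => csSup_le_csSup (bddAbove_image_mul_Ioc hle t)
    ((nonempty_Ioc.2 hs).image _) (image_mono (Ioc_subset_Ioc_right hst))

theorem supMul_le_div_mul (hle : ∀ u > 0, ε u ≤ 1) (hnonneg : ∀ u > 0, 0 ≤ ε u)
    (hanti : AntitoneOn ε (Ioi 0)) (hs : 0 < s) (hst : s ≤ t) :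
    supMul ε t ≤ t / s * supMul ε s := by
  have hsS : s * ε s ≤ supMul ε s := mul_le_supMul hle ⟨hs, le_rfl⟩
  have hts : 1 ≤ t / s := (one_le_div hs).2 hst
  refine supMul_le_of_forall_mem_Ioc (hs.trans_le hst) fun u ⟨hu, hut⟩ => ?_
  rcases le_or_gt u s with hus | hsu
  · calc u * ε u ≤ supMul ε s := mul_le_supMul hle ⟨hu, hus⟩
      _ ≤ t / s * supMul ε s :=
        le_mul_of_one_le_left ((mul_nonneg hs.le (hnonneg s hs)).trans hsS) hts
  · have hεus : ε u ≤ ε s := hanti hs (hs.trans hsu) hsu.le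
    calc u * ε u ≤ t * ε s := mul_le_mul hut hεus (hnonneg u hu) (hs.trans_le hst).le
      _ = t / s * (s * ε s) := by field_simp
      _ ≤ t / s * supMul ε s := mul_le_mul_of_nonneg_left hsS (by positivity)

theorem supMul_le_add_mul (hle : ∀ u > 0, ε u ≤ 1) {T η : ℝ} (hT0 : 0 ≤ T) (hη : 0 ≤ η)
    (hT : ∀ u ∈ Ici T, ε u ≤ η) (ht : 0 < t) : supMul ε t ≤ T + η * t := by
  refine supMul_le_of_forall_mem_Ioc ht fun u ⟨hu, hut⟩ => ?_
  rcases le_or_gt u T with huT | hTu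
  · nlinarith [hle u hu]
  · nlinarith [hT u hTu.le]

end SupMul

section EpsStar

variable {ε : ℝ → ℝ} {t : ℝ}

theorem epsStar_eq_inv_mul (ε : ℝ → ℝ) (t : ℝ) : epsStar ε t = t⁻¹ * supMul ε t := by
  rw [epsStar, supMul, one_div]

theorem mul_epsStar (ht : t ≠ 0) : t * epsStar ε t = supMul ε t := by
  rw [epsStar_eq_inv_mul, mul_inv_cancel_left₀ ht]

theorem le_epsStar (hle : ∀ u > 0, ε u ≤ 1) (ht : 0 < t) : ε t ≤ epsStar ε t := by
  rw [← mul_le_mul_iff_right₀ ht, mul_epsStar ht.ne']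
  exact mul_le_supMul hle ⟨ht, le_rfl⟩

theorem epsStar_le_one (hle : ∀ u > 0, ε u ≤ 1) (ht : 0 < t) : epsStar ε t ≤ 1 := by
  rw [← mul_le_mul_iff_right₀ ht, mul_epsStar ht.ne', mul_one]
  exact supMul_le_self hle ht

theorem epsStar_eq_one (hle : ∀ u > 0, ε u ≤ 1) (hone : ε t = 1) (ht : 0 < t) :
    epsStar ε t = 1 :=
  le_antisymm (epsStar_le_one hle ht) (hone ▸ le_epsStar hle ht)

theorem monotoneOn_mul_epsStar (hle : ∀ u > 0, ε u ≤ 1) :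
    MonotoneOn (fun t => t * epsStar ε t) (Ioi 0) :=
  (monotoneOn_supMul hle).congr fun _ ht => (mul_epsStar (ne_of_gt ht)).symm

theorem antitoneOn_epsStar (hle : ∀ u > 0, ε u ≤ 1) (hnonneg : ∀ u > 0, 0 ≤ ε u)
    (hanti : AntitoneOn ε (Ioi 0)) : AntitoneOn (epsStar ε) (Ioi 0) := by
  intro s hs t ht hst
  rw [epsStar_eq_inv_mul, epsStar_eq_inv_mul, inv_mul_le_iff₀ (ht : 0 < t), ← mul_assoc,
    ← div_eq_mul_inv]
  exact supMul_le_div_mul hle hnonneg hanti hs hst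

theorem tendsto_epsStar_atTop (hle : ∀ u > 0, ε u ≤ 1) (hnonneg : ∀ u > 0, 0 ≤ ε u)
    (hlim : Tendsto ε atTop (𝓝 0)) : Tendsto (epsStar ε) atTop (𝓝 0) := by
  refine tendsto_order.2 ⟨fun a ha => ?_, fun b hb => ?_⟩
  · filter_upwards [eventually_gt_atTop 0] with t ht
    exact ha.trans_le ((hnonneg t ht).trans (le_epsStar hle ht))
  · obtain ⟨T, hT0, hT⟩ :=
      (atTop_basis' 0).eventually_iff.1 (hlim.eventually (ge_mem_nhds (half_pos hb)))
    have hTt : Tendsto (fun t => T / t) atTop (𝓝 0) := tendsto_const_nhds.div_atTop tendsto_id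
    filter_upwards [eventually_gt_atTop 0, hTt.eventually (gt_mem_nhds (half_pos hb))]
      with t ht hTt
    have hS := supMul_le_add_mul hle hT0 (half_pos hb).le hT ht
    calc epsStar ε t = t⁻¹ * supMul ε t := epsStar_eq_inv_mul ε t
      _ ≤ t⁻¹ * (T + b / 2 * t) := mul_le_mul_of_nonneg_left hS (by positivity)
      _ = T / t + b / 2 := by field_simp
      _ < b := by linarith

end EpsStar

/-- Properties of the regularization `ε*`. -/
theorem stmt6 (ε : ℝ → ℝ)
    (hanti : AntitoneOn ε (Set.Ioi 0))
    (hrange : ∀ t > (0:ℝ), 0 < ε t ∧ ε t ≤ 1)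
    (hone : ∀ t ∈ Set.Ioc (0:ℝ) 1, ε t = 1)
    (hlim : Filter.Tendsto ε Filter.atTop (nhds 0)) :
    AntitoneOn (epsStar ε) (Set.Ioi 0) ∧
    (∀ t > (0:ℝ), ε t ≤ epsStar ε t ∧ epsStar ε t ≤ 1) ∧
    (∀ t ∈ Set.Ioc (0:ℝ) 1, epsStar ε t = 1) ∧
    MonotoneOn (fun t => t * epsStar ε t) (Set.Ioi 0) ∧
    Filter.Tendsto (epsStar ε) Filter.atTop (nhds 0) := by
  have hle : ∀ u > 0, ε u ≤ 1 := fun u hu => (hrange u hu).2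
  have hnonneg : ∀ u > 0, 0 ≤ ε u := fun u hu => (hrange u hu).1.le
  exact ⟨antitoneOn_epsStar hle hnonneg hanti,
    fun t ht => ⟨le_epsStar hle ht, epsStar_le_one hle ht⟩,
    fun t ht => epsStar_eq_one hle (hone t ht) ht.1,
    monotoneOn_mul_epsStar hle,
    tendsto_epsStar_atTop hle hnonneg hlim⟩
end

section
/- Let (X, d_X) and (Y, d_Y) be metric spaces. If X is nearly isometrically embeddable into Y, then for every 0 < s₁ ≤ s₂ < ∞ there exists a map f : X → Y such that d_Y(f(x),f(y)) = d_X(x,y) whenever d_X(x,y) ∈ [s₁, s₂]. -/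
/-!
With `s = min s₁ 1` and `S = max s₂ 1`, take the gauges `ρ t = min t √(S t)` and
`ω t = max t √(s t)`. They satisfy the conditions of near isometric embeddability
(`√(c t) / t = √(c / t)` tends to `0` at infinity and to `∞` at `0⁺`), while `ρ t = t` on
`[0, S]` and `ω t = t` on `[s, ∞)`.
An embedding with these gauges is therefore isometric on distances in `[s, S] ⊇ [s₁, s₂]`.
-/

open Filter Topology Real

namespace NearIsometric

noncomputable def sqrtCompression (S t : ℝ) : ℝ := min t √(S * t)

noncomputable def sqrtExpansion (s t : ℝ) : ℝ := max t √(s * t)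

lemma continuous_sqrtCompression (S : ℝ) : Continuous (sqrtCompression S) := by
  unfold sqrtCompression; fun_prop

lemma continuous_sqrtExpansion (s : ℝ) : Continuous (sqrtExpansion s) := by
  unfold sqrtExpansion; fun_prop

lemma sqrtCompression_eq_self {S t : ℝ} (ht : 0 ≤ t) (htS : t ≤ S) :
    sqrtCompression S t = t :=
  min_eq_left <| (le_sqrt ht (mul_nonneg (ht.trans htS) ht)).2 <| by nlinarith

lemma sqrtExpansion_eq_self {s t : ℝ} (hs : 0 ≤ s) (hst : s ≤ t) : sqrtExpansion s t = t :=
  max_eq_left <| (sqrt_le_left (hs.trans hst)).2 <| by nlinarith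

lemma sqrtCompression_nonneg {S t : ℝ} (ht : 0 ≤ t) : 0 ≤ sqrtCompression S t :=
  le_min ht (sqrt_nonneg _)

lemma sqrt_mul_div_self (c : ℝ) {t : ℝ} (ht : 0 ≤ t) : √(c * t) / t = √(c / t) := by
  rw [sqrt_mul' c ht, mul_div_assoc, sqrt_div_self', sqrt_div' c ht, mul_one_div]

lemma tendsto_sqrt_mul_div_self_atTop (c : ℝ) :
    Tendsto (fun t ↦ √(c * t) / t) atTop (𝓝 0) := by
  have h : Tendsto (fun t ↦ √(c / t)) atTop (𝓝 0) := by
    rw [← sqrt_zero]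
    exact (continuous_sqrt.tendsto 0).comp (tendsto_const_nhds.div_atTop tendsto_id)
  refine h.congr' ?_
  filter_upwards [eventually_ge_atTop 0] with t ht
  exact (sqrt_mul_div_self c ht).symm

lemma tendsto_sqrt_mul_div_self_nhdsGT {c : ℝ} (hc : 0 < c) :
    Tendsto (fun t ↦ √(c * t) / t) (𝓝[>] 0) atTop := by
  have h : Tendsto (fun t ↦ √(c / t)) (𝓝[>] 0) atTop :=
    tendsto_sqrt_atTop.comp (tendsto_inv_nhdsGT_zero.const_mul_atTop hc)
  refine h.congr' ?_
  filter_upwards [self_mem_nhdsWithin] with t ht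
  exact (sqrt_mul_div_self c (le_of_lt ht)).symm

lemma tendsto_sqrtCompression_div_self_atTop (S : ℝ) :
    Tendsto (fun t ↦ sqrtCompression S t / t) atTop (𝓝 0) := by
  refine squeeze_zero' ?_ ?_ (tendsto_sqrt_mul_div_self_atTop S)
  all_goals filter_upwards [eventually_ge_atTop 0] with t ht
  · exact div_nonneg (sqrtCompression_nonneg ht) ht
  · exact div_le_div_of_nonneg_right (min_le_right _ _) ht

lemma tendsto_sqrtExpansion_div_self_nhdsGT {s : ℝ} (hs : 0 < s) :
    Tendsto (fun t ↦ sqrtExpansion s t / t) (𝓝[>] 0) atTop := by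
  refine tendsto_atTop_mono' _ ?_ (tendsto_sqrt_mul_div_self_nhdsGT hs)
  filter_upwards [self_mem_nhdsWithin] with t ht
  exact div_le_div_of_nonneg_right (le_max_right _ _) (le_of_lt ht)

end NearIsometric

open NearIsometric in
/-- If `X` is nearly isometrically embeddable into `Y`, then for all
`0 < s₁ ≤ s₂ < ∞`, `X` admits an isometric range embedding with range `[s₁,s₂]`. -/
theorem stmt8 {X Y : Type*} [MetricSpace X] [MetricSpace Y]
    (h : ∀ ρ ω : ℝ → ℝ,
      ContinuousOn ρ (Set.Ici 0) → ContinuousOn ω (Set.Ici 0) →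
      (∀ t ≥ (0:ℝ), 0 ≤ ρ t) → (∀ t ≥ (0:ℝ), 0 ≤ ω t) →
      (∀ t ∈ Set.Icc (0:ℝ) 1, t ≤ ω t) → (∀ t ≥ (1:ℝ), ω t = t) →
      ω 0 = 0 →
      Filter.Tendsto (fun t => ω t / t) (nhdsWithin 0 (Set.Ioi 0)) Filter.atTop →
      (∀ t ∈ Set.Icc (0:ℝ) 1, ρ t = t) → (∀ t ≥ (1:ℝ), ρ t ≤ t) →
      Filter.Tendsto (fun t => ρ t / t) Filter.atTop (nhds 0) →
      ∃ f : X → Y, ∀ x y : X,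
        ρ (dist x y) ≤ dist (f x) (f y) ∧ dist (f x) (f y) ≤ ω (dist x y)) :
    ∀ s₁ s₂ : ℝ, 0 < s₁ → s₁ ≤ s₂ →
      ∃ f : X → Y, ∀ x y : X,
        dist x y ∈ Set.Icc s₁ s₂ → dist (f x) (f y) = dist x y := by
  intro s₁ s₂ hs₁ _
  set s := min s₁ 1
  set S := max s₂ 1
  have hs : 0 < s := lt_min hs₁ one_pos
  have hω_eq {t : ℝ} (hst : s ≤ t) : sqrtExpansion s t = t := sqrtExpansion_eq_self hs.le hst
  obtain ⟨f, hf⟩ := h (sqrtCompression S) (sqrtExpansion s)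
    (continuous_sqrtCompression S).continuousOn (continuous_sqrtExpansion s).continuousOn
    (fun _ ↦ sqrtCompression_nonneg) (fun _ ht ↦ ht.trans (le_max_left _ _))
    (fun _ _ ↦ le_max_left _ _) (fun _ ht ↦ hω_eq ((min_le_right _ _).trans ht))
    (by simp [sqrtExpansion]) (tendsto_sqrtExpansion_div_self_nhdsGT hs)
    (fun _ ht ↦ sqrtCompression_eq_self ht.1 (ht.2.trans (le_max_right _ _)))
    (fun _ _ ↦ min_le_left _ _)
    (tendsto_sqrtCompression_div_self_atTop S)
  refine ⟨f, fun x y hd ↦ le_antisymm ?_ ?_⟩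
  · simpa only [hω_eq ((min_le_left _ _).trans hd.1)] using (hf x y).2
  · have hS : dist x y ≤ S := hd.2.trans (le_max_left _ _)
    simpa only [sqrtCompression_eq_self dist_nonneg hS] using (hf x y).1
end

section
/- Let ρ, ω as in the class P, Ω with ρ non-decreasing, t ↦ ρ(t)/t non-increasing, ω non-decreasing, t ↦ t/ω(t) non-decreasing, and t ≤ ω(t) for t ∈ [0,1]. With R_{p,q}(x,y) = (ρ(d(p,q))/d(p,q))·min{d(p,q), d(x,y)}/ω(d(x,y)): if d(p,q) ≤ 1, then R_{p,q}(x,y) ≤ d(p,q)/ω(d(p,q)); hence R_{p,q}(x,y) → 0 as d(p,q) → 0, uniformly in (x,y). -/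
/-- `R_{p,q}(x,y) = (ρ(d(p,q))/d(p,q)) ⬝ min (d(p,q)) (d(x,y)) / ω(d(x,y))`. -/
noncomputable def Rpq13 {M : Type*} [MetricSpace M] (ρ ω : ℝ → ℝ) (p q x y : M) : ℝ :=
  (ρ (dist p q) / dist p q) * (min (dist p q) (dist x y) / ω (dist x y))

/-- If `d(p,q) ≤ 1` then `R_{p,q}(x,y) ≤ d(p,q)/ω(d(p,q))`; hence
`R_{p,q}(x,y) → 0` as `d(p,q) → 0`, uniformly in `(x,y)`. -/
theorem stmt13 {M : Type*} [MetricSpace M] (ρ ω : ℝ → ℝ)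
    (hρmono : MonotoneOn ρ (Set.Ici 0))
    (hρid : ∀ t ∈ Set.Icc (0:ℝ) 1, ρ t = t)
    (hρratio : AntitoneOn (fun t => ρ t / t) (Set.Ioi 0))
    (hωmono : MonotoneOn ω (Set.Ici 0))
    (hω0 : ω 0 = 0)
    (hωge : ∀ t ∈ Set.Icc (0:ℝ) 1, t ≤ ω t)
    (hωpos : ∀ t > (0:ℝ), 0 < ω t)
    (hωratio : MonotoneOn (fun t => t / ω t) (Set.Ioi 0))
    (hωlim : Filter.Tendsto (fun t => t / ω t) (nhdsWithin 0 (Set.Ioi 0)) (nhds 0)) :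
    (∀ p q x y : M, p ≠ q → x ≠ y → dist p q ≤ 1 →
      Rpq13 ρ ω p q x y ≤ dist p q / ω (dist p q)) ∧
    (∀ ε > (0:ℝ), ∃ δ : ℝ, 0 < δ ∧ ∀ p q x y : M, p ≠ q → x ≠ y →
      dist p q ≤ δ → Rpq13 ρ ω p q x y < ε) := by
  have key : ∀ p q x y : M, p ≠ q → x ≠ y → dist p q ≤ 1 →
      Rpq13 ρ ω p q x y ≤ dist p q / ω (dist p q) := by
    intro p q x y hpq hxy hle
    have hd : 0 < dist p q := dist_pos.mpr hpq
    have he : 0 < dist x y := dist_pos.mpr hxy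
    have hωd : 0 < ω (dist p q) := hωpos _ hd
    have hωe : 0 < ω (dist x y) := hωpos _ he
    have hρd : ρ (dist p q) = dist p q := hρid _ ⟨hd.le, hle⟩
    unfold Rpq13
    rw [hρd, div_self hd.ne', one_mul]
    rcases le_total (dist x y) (dist p q) with h | h
    · rw [min_eq_right h]
      exact hωratio (Set.mem_Ioi.mpr he) (Set.mem_Ioi.mpr hd) h
    · rw [min_eq_left h]
      exact div_le_div_of_nonneg_left hd.le hωd (hωmono (Set.mem_Ici.mpr hd.le) (Set.mem_Ici.mpr he.le) h)
  refine ⟨key, ?_⟩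
  intro ε hε
  rw [Metric.tendsto_nhdsWithin_nhds] at hωlim
  obtain ⟨δ', hδ', hδ⟩ := hωlim ε hε
  refine ⟨min (δ'/2) 1, lt_min (by linarith) one_pos, ?_⟩
  intro p q x y hpq hxy hle
  have hd : 0 < dist p q := dist_pos.mpr hpq
  have h1 : dist p q ≤ 1 := hle.trans (min_le_right _ _)
  have h2 : dist p q < δ' := lt_of_le_of_lt (hle.trans (min_le_left _ _)) (by linarith)
  have := hδ (Set.mem_Ioi.mpr hd) (by rwa [Real.dist_eq, sub_zero, abs_of_pos hd])
  rw [Real.dist_eq, sub_zero] at this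
  have hab : dist p q / ω (dist p q) < ε := lt_of_le_of_lt (le_abs_self _) this
  exact lt_of_le_of_lt (key p q x y hpq hxy h1) hab
end

section
/- Let X and Y be normed spaces, k ∈ ℤ, and let f_k, f_{k+1} : X → Y be 1-Lipschitz maps with f_k(0) = f_{k+1}(0) = 0. Define f on the annulus {x : 2^k ≤ ‖x‖ ≤ 2^{k+1}} by f(x) = λ_x f_k(x) + (1-λ_x) f_{k+1}(x), where λ_x = (2^{k+1} - ‖x‖)/2^k. Then for all x, y with 2^k ≤ ‖x‖ ≤ ‖y‖ < 2^{k+1}, one has ‖f(x) - f(y)‖ ≤ 5‖x - y‖. -/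
/-- The convex interpolation `f(x) = λ_x f_k(x) + (1-λ_x) f_{k+1}(x)` of two
1-Lipschitz maps vanishing at `0` is `5`-Lipschitz on the annulus
`2^k ≤ ‖x‖ ≤ ‖y‖ < 2^{k+1}`. -/
theorem stmt14 {X Y : Type*} [NormedAddCommGroup X]
    [NormedAddCommGroup Y] [NormedSpace ℝ Y] (k : ℤ)
    (f g : X → Y)
    (hf : ∀ a b : X, ‖f a - f b‖ ≤ ‖a - b‖)
    (hg : ∀ a b : X, ‖g a - g b‖ ≤ ‖a - b‖)
    (hf0 : f 0 = 0) (hg0 : g 0 = 0) :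
    ∀ x y : X, (2:ℝ) ^ k ≤ ‖x‖ → ‖x‖ ≤ ‖y‖ → ‖y‖ < (2:ℝ) ^ (k + 1) →
      ‖((((2:ℝ) ^ (k + 1) - ‖x‖) / (2:ℝ) ^ k) • f x +
          (1 - ((2:ℝ) ^ (k + 1) - ‖x‖) / (2:ℝ) ^ k) • g x) -
        ((((2:ℝ) ^ (k + 1) - ‖y‖) / (2:ℝ) ^ k) • f y +
          (1 - ((2:ℝ) ^ (k + 1) - ‖y‖) / (2:ℝ) ^ k) • g y)‖ ≤ 5 * ‖x - y‖ := by
  intro x y hx hxy hy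
  have h2k : (0:ℝ) < 2 ^ k := by positivity
  have hk1 : (2:ℝ) ^ (k + 1) = 2 * 2 ^ k := by
    rw [zpow_add_one₀ (by norm_num : (2:ℝ) ≠ 0)]; ring
  set a : ℝ := ((2:ℝ) ^ (k + 1) - ‖x‖) / 2 ^ k with ha
  set b : ℝ := ((2:ℝ) ^ (k + 1) - ‖y‖) / 2 ^ k with hb
  have hxy' : ‖x‖ < (2:ℝ) ^ (k + 1) := lt_of_le_of_lt hxy hy
  have ha0 : 0 ≤ a := div_nonneg (by linarith) h2k.le
  have ha1 : a ≤ 1 := by rw [ha, div_le_one h2k]; linarith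
  have hab : a - b = (‖y‖ - ‖x‖) / 2 ^ k := by rw [ha, hb]; ring
  have hab0 : 0 ≤ a - b := by rw [hab]; exact div_nonneg (by linarith) h2k.le
  have hyx : ‖y‖ - ‖x‖ ≤ ‖x - y‖ := by
    have := abs_norm_sub_norm_le y x
    rw [norm_sub_rev y x] at this
    exact (le_abs_self _).trans this
  have habb : a - b ≤ ‖x - y‖ / 2 ^ k := by
    rw [hab]; exact div_le_div_of_nonneg_right hyx h2k.le
  have hfy : ‖f y‖ ≤ ‖y‖ := by simpa [hf0] using hf y 0
  have hgy : ‖g y‖ ≤ ‖y‖ := by simpa [hg0] using hg y 0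
  have hfy2 : ‖f y‖ ≤ 2 * 2 ^ k := by linarith [hk1 ▸ hy]
  have hgy2 : ‖g y‖ ≤ 2 * 2 ^ k := by linarith [hk1 ▸ hy]
  have key : (a • f x + (1 - a) • g x) - (b • f y + (1 - b) • g y)
      = (a • (f x - f y) + (a - b) • f y) +
        ((1 - a) • (g x - g y) + (b - a) • g y) := by module
  rw [key]
  have hdiv : ‖x - y‖ / 2 ^ k * (2 * 2 ^ k) = 2 * ‖x - y‖ := by
    field_simp
  have h1 : ‖a • (f x - f y)‖ ≤ a * ‖x - y‖ := by
    rw [norm_smul, Real.norm_eq_abs, abs_of_nonneg ha0]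
    exact mul_le_mul_of_nonneg_left (hf x y) ha0
  have h2 : ‖(a - b) • f y‖ ≤ 2 * ‖x - y‖ := by
    rw [norm_smul, Real.norm_eq_abs, abs_of_nonneg hab0, ← hdiv]
    exact mul_le_mul habb hfy2 (norm_nonneg _) (div_nonneg (norm_nonneg _) h2k.le)
  have h3 : ‖(1 - a) • (g x - g y)‖ ≤ (1 - a) * ‖x - y‖ := by
    rw [norm_smul, Real.norm_eq_abs, abs_of_nonneg (by linarith)]
    exact mul_le_mul_of_nonneg_left (hg x y) (by linarith)
  have h4 : ‖(b - a) • g y‖ ≤ 2 * ‖x - y‖ := by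
    rw [norm_smul, Real.norm_eq_abs, abs_of_nonpos (by linarith), neg_sub, ← hdiv]
    exact mul_le_mul habb hgy2 (norm_nonneg _) (div_nonneg (norm_nonneg _) h2k.le)
  calc ‖(a • (f x - f y) + (a - b) • f y) + ((1 - a) • (g x - g y) + (b - a) • g y)‖
      ≤ ‖a • (f x - f y) + (a - b) • f y‖ + ‖(1 - a) • (g x - g y) + (b - a) • g y‖ :=
        norm_add_le _ _
    _ ≤ (‖a • (f x - f y)‖ + ‖(a - b) • f y‖) +
        (‖(1 - a) • (g x - g y)‖ + ‖(b - a) • g y‖) :=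
        add_le_add (norm_add_le _ _) (norm_add_le _ _)
    _ ≤ (a * ‖x - y‖ + 2 * ‖x - y‖) + ((1 - a) * ‖x - y‖ + 2 * ‖x - y‖) :=
        add_le_add (add_le_add h1 h2) (add_le_add h3 h4)
    _ = 5 * ‖x - y‖ := by ring
end

section
/- Let X, Y be metric spaces and suppose K ⊆ X is a set such that for some fixed r > 0 and D ≥ 1, for every n ≥ 1 there is a map f_n : K → Y satisfying r·d_X(x,y) ≤ d_Y(f_n(x),f_n(y)) ≤ D·r·d_X(x,y) whenever d_X(x,y) ≥ 1/n. Then, with a suitably chosen basepoint t₀, K admits a bi-Lipschitz embedding with distortion at most D into the ultrapower Y_U of Y with respect to any non-principal ultrafilter U on ℕ. -/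
/-- If `K ⊆ X` admits, for every `n ≥ 1`, a `[1/n,∞)`-range embedding into `Y`
with constants `r, D` independent of `n`, then `K` bi-Lipschitzly embeds with
distortion at most `D` into the metric ultrapower of `Y` along any
non-principal ultrafilter `U` on `ℕ`: there is a map into sequences in `Y`
whose `U`-limit distances satisfy the bi-Lipschitz estimates. -/
theorem stmt16 {X Y : Type*} [MetricSpace X] [MetricSpace Y]
    (K : Set X) (t₀ : Y) (U : Ultrafilter ℕ)
    (hU : (U : Filter ℕ) ≤ Filter.cofinite)
    (r D : ℝ) (hr : 0 < r) (hD : 1 ≤ D)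
    (hf : ∀ n : ℕ, 1 ≤ n → ∃ f : X → Y, ∀ x ∈ K, ∀ y ∈ K,
      1 / (n : ℝ) ≤ dist x y →
      r * dist x y ≤ dist (f x) (f y) ∧ dist (f x) (f y) ≤ D * (r * dist x y)) :
    ∃ F : X → ℕ → Y, ∃ r' > (0:ℝ),
      (∀ x ∈ K, ∀ y ∈ K, BddAbove (Set.range fun n => dist (F x n) (F y n))) ∧
      ∀ x ∈ K, ∀ y ∈ K, ∃ L : ℝ,
        Filter.Tendsto (fun n => dist (F x n) (F y n)) (U : Filter ℕ) (nhds L) ∧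
        r' * dist x y ≤ L ∧ L ≤ D * (r' * dist x y) := by
  choose f hf' using hf
  set F : X → ℕ → Y := fun x n => if h : 1 ≤ n then f n h x else t₀ with hF
  have key : ∀ x ∈ K, ∀ y ∈ K, ∀ᶠ n in Filter.cofinite,
      dist (F x n) (F y n) ∈ Set.Icc (r * dist x y) (D * (r * dist x y)) := by
    intro x hx y hy
    rcases eq_or_ne x y with rfl | hxy
    · filter_upwards with n
      simp [dist_self]
    · have hd : 0 < dist x y := dist_pos.2 hxy
      obtain ⟨N, hN⟩ := exists_nat_one_div_lt hd
      rw [Nat.cofinite_eq_atTop, Filter.eventually_atTop]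
      refine ⟨N + 1, fun n hn => ?_⟩
      have h1 : 1 ≤ n := le_trans (Nat.le_add_left 1 N) hn
      have hle : 1 / (n : ℝ) ≤ dist x y := by
        refine le_trans (le_trans ?_ hN.le) le_rfl
        apply one_div_le_one_div_of_le
        · positivity
        · exact_mod_cast hn
      have := hf' n h1 x hx y hy hle
      simpa [F, h1] using this
  refine ⟨F, r, hr, ?_, ?_⟩
  · intro x hx y hy
    have hfin : {n | ¬ dist (F x n) (F y n) ∈
        Set.Icc (r * dist x y) (D * (r * dist x y))}.Finite := key x hx y hy
    have hsub : Set.range (fun n => dist (F x n) (F y n)) ⊆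
        ((fun n => dist (F x n) (F y n)) '' {n | ¬ dist (F x n) (F y n) ∈
          Set.Icc (r * dist x y) (D * (r * dist x y))}) ∪
        Set.Iic (D * (r * dist x y)) := by
      rintro - ⟨n, rfl⟩
      by_cases h : dist (F x n) (F y n) ∈ Set.Icc (r * dist x y) (D * (r * dist x y))
      · exact Or.inr h.2
      · exact Or.inl ⟨n, h, rfl⟩
    exact ((hfin.image _).bddAbove.union bddAbove_Iic).mono hsub
  · intro x hx y hy
    set g : ℕ → ℝ := fun n => dist (F x n) (F y n) with hg
    have hmem : Set.Icc (r * dist x y) (D * (r * dist x y)) ∈ (U : Filter ℕ).map g :=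
      Filter.mem_map.2 (hU (key x hx y hy))
    obtain ⟨L, hL, hle⟩ := isCompact_Icc.ultrafilter_le_nhds (U.map g)
      (by rwa [Ultrafilter.coe_map, Filter.le_principal_iff])
    exact ⟨L, hle, hL.1, hL.2⟩
end

section
/- Let X, Y be metric spaces with basepoints. If for every n ≥ 1 there exists a map f_n : X → Y such that d_Y(f_n(x), f_n(y)) = d_X(x,y) whenever d_X(x,y) ∈ [1/n, n], then X embeds isometrically into the metric ultrapower Y_U of Y for any non-principal ultrafilter U on ℕ. -/
/-- If for every `n ≥ 1` there is `f_n : X → Y` which is isometric on the range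
of distances `[1/n, n]`, then `X` embeds isometrically into the metric
ultrapower of `Y` along any non-principal ultrafilter `U` on `ℕ`: there is a
map into sequences in `Y` whose `U`-limit distances equal the distances in `X`. -/
theorem stmt17 {X Y : Type*} [MetricSpace X] [MetricSpace Y]
    (x₀ : X) (t₀ : Y) (U : Ultrafilter ℕ)
    (hU : (U : Filter ℕ) ≤ Filter.cofinite)
    (hf : ∀ n : ℕ, 1 ≤ n → ∃ f : X → Y, ∀ x y : X,
      dist x y ∈ Set.Icc (1 / (n : ℝ)) (n : ℝ) → dist (f x) (f y) = dist x y) :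
    ∃ F : X → ℕ → Y, ∀ x y : X,
      Filter.Tendsto (fun n => dist (F x n) (F y n)) (U : Filter ℕ)
        (nhds (dist x y)) := by
  choose f hfspec using hf
  refine ⟨fun x n => if h : 1 ≤ n then f n h x else t₀, fun x y => ?_⟩
  by_cases hxy : x = y
  · subst hxy
    simp
  · have hd : 0 < dist x y := dist_pos.2 hxy
    have hev : ∀ᶠ n in (U : Filter ℕ),
        dist (if h : 1 ≤ n then f n h x else t₀) (if h : 1 ≤ n then f n h y else t₀)
          = dist x y := by
      refine Filter.Eventually.filter_mono hU ?_
      rw [Nat.cofinite_eq_atTop, Filter.eventually_atTop]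
      refine ⟨max 1 ⌈max (dist x y) (1 / dist x y)⌉₊, fun n hn => ?_⟩
      have h1 : 1 ≤ n := le_trans (le_max_left _ _) hn
      have h2 : (⌈max (dist x y) (1 / dist x y)⌉₊ : ℕ) ≤ n :=
        le_trans (le_max_right _ _) hn
      have h3 : max (dist x y) (1 / dist x y) ≤ (n : ℝ) := by
        calc max (dist x y) (1 / dist x y) ≤ (⌈max (dist x y) (1 / dist x y)⌉₊ : ℝ) :=
              Nat.le_ceil _
          _ ≤ (n : ℝ) := by exact_mod_cast h2
      have hnpos : (0 : ℝ) < n := by exact_mod_cast h1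
      have hle : dist x y ≤ (n : ℝ) := le_trans (le_max_left _ _) h3
      have hge : 1 / (n : ℝ) ≤ dist x y := by
        rw [div_le_iff₀ hnpos]
        have := le_trans (le_max_right _ _) h3
        rw [div_le_iff₀ hd] at this
        linarith [mul_comm (dist x y) (n : ℝ)]
      rw [dif_pos h1, dif_pos h1]
      exact hfspec n h1 x y ⟨hge, hle⟩
    exact Filter.Tendsto.congr' (hev.mono fun n h => h.symm) tendsto_const_nhds
end
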